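/- arXiv:2505.03098 — 2 statements merged into one kernel-verified Lean document; each statement's English description precedes it below -/
import Mathlib

section
/- Let K ≥ 1, let g(t) = Σ_{k=1}^K a_k sin(ω_k t + φ_k) with real parameters, Ω = max_k |ω_k| > 0, ‖a‖₁ = Σ_{k=1}^K |a_k| > 0, and let λ > 0, L ≥ 1 an integer, and κ > 0 with (1/2)(κ/‖a‖₁)^{1/L} ≤ 1. Let g_T(n) = g(nT), let Δ denote the finite-difference operator (Δh)(n) = h(n+1) − h(n), and let ε_s(n) = s(n) − ℳ_λ(s(n)) denote the modulo residue of a sequence s, where ℳ_λ(x) = 2λ(fract((x+λ)/(2λ)) − 1/2). If 0 < T ≤ (2/Ω)·arcsin((1/2)(κ/‖a‖₁)^{1/L}), then for every n ∈ ℤ, |(Δ ε_{Δ^{L−1} g_T})(n)| ≤ 2λ·⌈κ/(2λ)⌉. -/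
/-- First-order finite-difference operator on sequences `ℤ → ℝ`. -/
def fdiff (h : ℤ → ℝ) : ℤ → ℝ := fun n => h (n + 1) - h n

/-- The modulo (folding) map `ℳ_λ(x) = 2λ(fract((x+λ)/(2λ)) − 1/2)`. -/
noncomputable def modMap (lam x : ℝ) : ℝ :=
  2 * lam * (Int.fract ((x + lam) / (2 * lam)) - 1 / 2)

/-- The modulo residue `ε_s(n) = s(n) − ℳ_λ(s(n))` of a sequence `s : ℤ → ℝ`. -/
noncomputable def residue (lam : ℝ) (s : ℤ → ℝ) : ℤ → ℝ :=
  fun n => s n - modMap lam (s n)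

lemma fdiff_iter_const_mul (L : ℕ) (c : ℝ) (h : ℤ → ℝ) :
    fdiff^[L] (fun n => c * h n) = fun n => c * fdiff^[L] h n := by
  induction L generalizing h with
  | zero => simp
  | succ L ih =>
      rw [Function.iterate_succ_apply, Function.iterate_succ_apply]
      have : fdiff (fun n => c * h n) = fun n => c * fdiff h n := by
        funext n; simp [fdiff]; ring
      rw [this, ih]

lemma fdiff_sin (ω T φ : ℝ) :
    fdiff (fun n : ℤ => Real.sin (ω * (n * T) + φ)) =
      fun n : ℤ => (2 * Real.sin (ω * T / 2)) *
        Real.sin (ω * (n * T) + (φ + ω * T / 2 + Real.pi / 2)) := by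
  funext n
  show Real.sin (ω * ((n + 1 : ℤ) * T) + φ) - Real.sin (ω * (n * T) + φ) = _
  rw [Real.sin_sub_sin]
  rw [show (ω * ((n + 1 : ℤ) * T) + φ - (ω * (n * T) + φ)) / 2 = ω * T / 2 by
    push_cast; ring]
  rw [show (ω * ((n + 1 : ℤ) * T) + φ + (ω * (n * T) + φ)) / 2
      = ω * (n * T) + (φ + ω * T / 2) by push_cast; ring]
  rw [← Real.sin_add_pi_div_two]
  ring_nf

lemma fdiff_iter_sin (ω T : ℝ) (L : ℕ) (φ : ℝ) :
    ∃ ψ : ℝ, fdiff^[L] (fun n : ℤ => Real.sin (ω * (n * T) + φ)) =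
      fun n : ℤ => (2 * Real.sin (ω * T / 2)) ^ L * Real.sin (ω * (n * T) + ψ) := by
  induction L generalizing φ with
  | zero => exact ⟨φ, by simp⟩
  | succ L ih =>
      obtain ⟨ψ, hψ⟩ := ih (φ + ω * T / 2 + Real.pi / 2)
      refine ⟨ψ, ?_⟩
      rw [Function.iterate_succ_apply, fdiff_sin, fdiff_iter_const_mul, hψ]
      funext n; ring

lemma fdiff_iter_sum {K : ℕ} (L : ℕ) (f : Fin K → ℤ → ℝ) :
    fdiff^[L] (fun n => ∑ k, f k n) = fun n => ∑ k, fdiff^[L] (f k) n := by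
  induction L generalizing f with
  | zero => simp
  | succ L ih =>
      rw [Function.iterate_succ_apply]
      have : fdiff (fun n => ∑ k, f k n) = fun n => ∑ k, fdiff (f k) n := by
        funext n; simp [fdiff, Finset.sum_sub_distrib]
      rw [this, ih]
      funext n
      simp [Function.iterate_succ_apply]

lemma residue_eq (lam : ℝ) (hlam : 0 < lam) (s : ℤ → ℝ) (n : ℤ) :
    residue lam s n = 2 * lam * ⌊(s n + lam) / (2 * lam)⌋ := by
  have h2 : (2 : ℝ) * lam ≠ 0 := by positivity
  simp only [residue, modMap, Int.fract]
  field_simp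
  ring

lemma abs_modMap_le (lam : ℝ) (hlam : 0 < lam) (x : ℝ) : |modMap lam x| ≤ lam := by
  have h0 := Int.fract_nonneg ((x + lam) / (2 * lam))
  have h1 := Int.fract_lt_one ((x + lam) / (2 * lam))
  rw [abs_le, modMap]
  constructor <;> nlinarith

lemma modMap_bounds (lam : ℝ) (hlam : 0 < lam) (x : ℝ) :
    -lam ≤ modMap lam x ∧ modMap lam x < lam := by
  have h0 := Int.fract_nonneg ((x + lam) / (2 * lam))
  have h1 := Int.fract_lt_one ((x + lam) / (2 * lam))
  constructor <;> [skip; skip] <;> unfold modMap <;> nlinarith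


/-- Lemma 1 of the paper. -/
theorem residue_of_iterated_difference_bound
    (K : ℕ) (hK : 1 ≤ K) (a ω φ : Fin K → ℝ)
    (g : ℝ → ℝ)
    (hg : ∀ t : ℝ, g t = ∑ k, a k * Real.sin (ω k * t + φ k))
    (Ω : ℝ)
    (hΩ : Ω = Finset.univ.sup'
      (⟨⟨0, hK⟩, Finset.mem_univ _⟩ : (Finset.univ : Finset (Fin K)).Nonempty)
      (fun k => |ω k|))
    (hΩpos : 0 < Ω)
    (A : ℝ) (hA : A = ∑ k, |a k|) (hApos : 0 < A)
    (lam : ℝ) (hlam : 0 < lam)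
    (L : ℕ) (hL : 1 ≤ L) (κ : ℝ) (hκ : 0 < κ)
    (harg : (1 / 2) * (κ / A) ^ ((1 : ℝ) / L) ≤ 1)
    (T : ℝ) (hT : 0 < T)
    (hTle : T ≤ (2 / Ω) * Real.arcsin ((1 / 2) * (κ / A) ^ ((1 : ℝ) / L)))
    (gT : ℤ → ℝ) (hgT : ∀ n : ℤ, gT n = g (n * T)) :
    ∀ n : ℤ, |fdiff (residue lam (fdiff^[L - 1] gT)) n| ≤ 2 * lam * ⌈κ / (2 * lam)⌉ := by
  set c : ℝ := (1 / 2) * (κ / A) ^ ((1 : ℝ) / L) with hc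
  have hc0 : 0 ≤ c := by
    have := Real.rpow_nonneg (le_of_lt (div_pos hκ hApos)) ((1 : ℝ) / L)
    positivity
  -- rewrite gT as a sum of sampled sinusoids
  have hgT' : gT = fun n : ℤ => ∑ k, a k * Real.sin (ω k * (n * T) + φ k) := by
    funext n; rw [hgT, hg]
  -- iterated differences of sinusoids
  choose ψ hψ using fun k => fdiff_iter_sin (ω k) T L (φ k)
  have hiter : fdiff^[L] gT = fun n : ℤ =>
      ∑ k, a k * ((2 * Real.sin (ω k * T / 2)) ^ L * Real.sin (ω k * (n * T) + ψ k)) := by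
    rw [hgT', fdiff_iter_sum]
    funext n
    refine Finset.sum_congr rfl fun k _ => ?_
    rw [fdiff_iter_const_mul, hψ k]
  -- trig bounds
  have hmono := Real.strictMonoOn_sin.monotoneOn
  have harcsin_le : Real.arcsin c ≤ Real.pi / 2 := Real.arcsin_le_pi_div_two c
  have harcsin_nonneg : 0 ≤ Real.arcsin c := Real.arcsin_nonneg.mpr hc0
  have hΩT : Ω * T / 2 ≤ Real.arcsin c := by
    have h2 : Ω * ((2 / Ω) * Real.arcsin c) = 2 * Real.arcsin c := by field_simp
    nlinarith [mul_le_mul_of_nonneg_left hTle (le_of_lt hΩpos)]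
  have hΩT0 : 0 ≤ Ω * T / 2 := by positivity
  have hΩT2 : Ω * T / 2 ≤ Real.pi / 2 := le_trans hΩT harcsin_le
  have hsinΩ : Real.sin (Ω * T / 2) ≤ c := by
    have := hmono (Set.mem_Icc.mpr ⟨by linarith, hΩT2⟩)
      (Set.mem_Icc.mpr ⟨by linarith [Real.arcsin_nonneg.mpr hc0], harcsin_le⟩) hΩT
    rwa [Real.sin_arcsin (by linarith) harg] at this
  -- the pow identity
  have hLne : (L : ℝ) ≠ 0 := Nat.cast_ne_zero.mpr (by omega)
  have hpow : (2 * c) ^ L = κ / A := by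
    have h2c : 2 * c = (κ / A) ^ ((1 : ℝ) / L) := by rw [hc]; ring
    rw [h2c, ← Real.rpow_natCast ((κ / A) ^ ((1 : ℝ) / L)) L,
      ← Real.rpow_mul (le_of_lt (div_pos hκ hApos)), one_div,
      inv_mul_cancel₀ hLne, Real.rpow_one]
  -- amplitude bound for Δ^L gT
  have hbound : ∀ n : ℤ, |fdiff^[L] gT n| ≤ κ := by
    intro n
    rw [hiter]
    calc |∑ k, a k * ((2 * Real.sin (ω k * T / 2)) ^ L * Real.sin (ω k * (n * T) + ψ k))|
        ≤ ∑ k, |a k * ((2 * Real.sin (ω k * T / 2)) ^ L * Real.sin (ω k * (n * T) + ψ k))| :=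
          Finset.abs_sum_le_sum_abs _ _
      _ ≤ ∑ k, |a k| * (κ / A) := by
          refine Finset.sum_le_sum fun k _ => ?_
          have hkΩ : |ω k| ≤ Ω := hΩ ▸ Finset.le_sup' (fun k => |ω k|) (Finset.mem_univ k)
          have habs : |ω k * T / 2| ≤ Ω * T / 2 := by
            rw [abs_div, abs_mul, abs_of_pos hT, abs_of_pos (by norm_num : (0:ℝ) < 2)]
            gcongr
          have hsink : |Real.sin (ω k * T / 2)| ≤ Real.sin (Ω * T / 2) := by
            have heq : |Real.sin (ω k * T / 2)| = Real.sin |ω k * T / 2| := by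
              rcases abs_cases (ω k * T / 2) with ⟨h1, h2⟩ | ⟨h1, h2⟩
              · rw [h1, abs_of_nonneg (Real.sin_nonneg_of_nonneg_of_le_pi h2
                  (by linarith [Real.pi_pos, habs, hΩT2]))]
              · have hx : Real.sin (ω k * T / 2) ≤ 0 :=
                  Real.sin_nonpos_of_nonpos_of_neg_pi_le (le_of_lt h2)
                    (by rw [h1] at habs; linarith [Real.pi_pos, hΩT2])
                rw [h1, Real.sin_neg, abs_of_nonpos hx]
            rw [heq]
            exact hmono (Set.mem_Icc.mpr ⟨by linarith [abs_nonneg (ω k * T / 2)],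
              by linarith⟩) (Set.mem_Icc.mpr ⟨by linarith, hΩT2⟩) habs
          have h2s : |2 * Real.sin (ω k * T / 2)| ≤ 2 * c := by
            rw [abs_mul, abs_of_pos (by norm_num : (0:ℝ) < 2)]
            nlinarith
          have hpL : |(2 * Real.sin (ω k * T / 2)) ^ L| ≤ κ / A := by
            rw [abs_pow, ← hpow]
            exact pow_le_pow_left₀ (abs_nonneg _) h2s L
          calc |a k * ((2 * Real.sin (ω k * T / 2)) ^ L * Real.sin (ω k * (n * T) + ψ k))|
              = |a k| * (|(2 * Real.sin (ω k * T / 2)) ^ L| * |Real.sin (ω k * (n * T) + ψ k)|) := by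
                rw [abs_mul, abs_mul]
            _ ≤ |a k| * ((κ / A) * 1) :=
                mul_le_mul_of_nonneg_left
                  (mul_le_mul hpL (Real.abs_sin_le_one _) (abs_nonneg _)
                    (le_of_lt (div_pos hκ hApos))) (abs_nonneg _)
            _ = |a k| * (κ / A) := by ring
      _ = A * (κ / A) := by rw [← Finset.sum_mul, ← hA]
      _ = κ := by field_simp
  -- final assembly
  intro n
  set s : ℤ → ℝ := fdiff^[L - 1] gT with hs
  have hfs : fdiff s n = fdiff^[L] gT n := by
    rw [hs, show L = (L - 1) + 1 by omega]
    rw [Function.iterate_succ_apply']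
    simp [Nat.succ_sub_one]
  set m : ℤ → ℤ := fun j => ⌊(s j + lam) / (2 * lam)⌋ with hm
  have hres : ∀ j, residue lam s j = 2 * lam * m j := fun j => residue_eq lam hlam s j
  set d : ℤ := m (n + 1) - m n with hd
  have heqd : fdiff (residue lam s) n = 2 * lam * (d : ℝ) := by
    simp only [fdiff, hres, hd]
    push_cast; ring
  have heq2 : fdiff (residue lam s) n
      = fdiff s n - (modMap lam (s (n + 1)) - modMap lam (s n)) := by
    simp only [fdiff, residue]; ring
  obtain ⟨hb1, hb2⟩ := modMap_bounds lam hlam (s (n + 1))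
  obtain ⟨hb3, hb4⟩ := modMap_bounds lam hlam (s n)
  have hfsb : |fdiff s n| ≤ κ := hfs ▸ hbound n
  rw [abs_le] at hfsb
  have hlt1 : 2 * lam * (d : ℝ) < κ + 2 * lam := by
    rw [← heqd, heq2]; linarith
  have hlt2 : -(κ + 2 * lam) < 2 * lam * (d : ℝ) := by
    rw [← heqd, heq2]; linarith
  have h2l : (0 : ℝ) < 2 * lam := by positivity
  have hmul : 2 * lam * (κ / (2 * lam) + 1) = κ + 2 * lam := by field_simp
  have hdabs : (|d| : ℝ) < κ / (2 * lam) + 1 := by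
    rw [abs_lt]
    constructor
    · rw [← mul_lt_mul_iff_right₀ h2l, mul_neg, hmul]; linarith
    · rw [← mul_lt_mul_iff_right₀ h2l, hmul]; linarith
  have hdle : |d| ≤ ⌈κ / (2 * lam)⌉ := by
    have : |d| - 1 < ⌈κ / (2 * lam)⌉ := by
      rw [Int.lt_ceil]; push_cast; linarith
    omega
  rw [heqd, abs_mul, abs_of_pos h2l, ← Int.cast_abs]
  exact mul_le_mul_of_nonneg_left (by exact_mod_cast hdle) (le_of_lt h2l)
end

section
/- Let a₁ ∈ ℝ with a₁ ≠ 0, T > 0, and ω₁, φ₁ ∈ ℝ with sin(ω₁T) ≠ 0; set θ_n = ω₁Tn + φ₁, z₁(n) = sin θ_{n+1} − sin θ_n, z₂(n) = a₁T((n+1)cos θ_{n+1} − n cos θ_n), z₃(n) = a₁(cos θ_{n+1} − cos θ_n), and let R_N be the 3×3 real matrix with entries [R_N]_{i,j} = Σ_{n=1}^{N−1} z_i(n)·z_j(n). Then lim_{N→∞} det(R_N)/N⁵ = a₁⁴·T²·(1 − cos(ω₁T))³/12. -/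
/-!
Put `ψ = ω₁T`. Each `zᵢ(n)` is `Pᵢ(n) cos θₙ + Qᵢ(n) sin θₙ` with polynomials `Pᵢ, Qᵢ` of degree
at most `eᵢ`, where `e = (0, 1, 0)`. The product of two such sequences is a polynomial in `n`,
plus a sinusoid of frequency `2ψ` with polynomial amplitude. As `sin ψ ≠ 0`, Abel summation
against the bounded partial sums of `cos(2ψn + β)` makes the sinusoidal part negligible, while
Faulhaber's formula gives `∑_{n<N} nᵏ ~ N^(k+1)/(k+1)`. Hence `[R_N]ᵢⱼ / N^(eᵢ+eⱼ+1)` converges to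
`⟨ℓᵢ, ℓⱼ⟩ / (2(eᵢ+eⱼ+1))`, where `ℓᵢ` is the pair of degree-`eᵢ` coefficients of `(Pᵢ, Qᵢ)`. The
determinant of this rescaled matrix is `det R_N / N⁵`, and by continuity of `det` it converges
to the determinant of the limit.
-/

open Filter

/-- The three sensitivity sequences `z₁, z₂, z₃` (partial derivatives of the
first-order difference of the sampled sinusoid w.r.t. amplitude, frequency, phase). -/
noncomputable def zSeq (a₁ T ω₁ φ₁ : ℝ) : Fin 3 → ℕ → ℝ :=
  ![fun n => Real.sin (ω₁ * T * (n + 1) + φ₁) - Real.sin (ω₁ * T * n + φ₁),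
    fun n => a₁ * T * ((n + 1) * Real.cos (ω₁ * T * (n + 1) + φ₁)
      - n * Real.cos (ω₁ * T * n + φ₁)),
    fun n => a₁ * (Real.cos (ω₁ * T * (n + 1) + φ₁) - Real.cos (ω₁ * T * n + φ₁))]

/-- The Gram (Fisher-information-type) matrix `R_N` with entries
`[R_N]_{i,j} = Σ_{n=1}^{N−1} z_i(n) z_j(n)`. -/
noncomputable def Rmat (a₁ T ω₁ φ₁ : ℝ) (N : ℕ) : Matrix (Fin 3) (Fin 3) ℝ :=
  Matrix.of fun i j => ∑ n ∈ Finset.Icc 1 (N - 1),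
    zSeq a₁ T ω₁ φ₁ i n * zSeq a₁ T ω₁ φ₁ j n

open Topology Finset Real Asymptotics
open scoped Polynomial

lemma tendsto_div_pow_of_lt {f : ℕ → ℝ} {k j : ℕ} {L : ℝ} (hkj : k < j)
    (hf : Tendsto (fun N : ℕ => f N / (N : ℝ) ^ k) atTop (𝓝 L)) :
    Tendsto (fun N : ℕ => f N / (N : ℝ) ^ j) atTop (𝓝 0) := by
  have hinv : Tendsto (fun N : ℕ => ((N : ℝ)⁻¹) ^ (j - k)) atTop (𝓝 0) := by
    simpa [zero_pow (Nat.sub_ne_zero_of_lt hkj)] using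
      (tendsto_inv_atTop_nhds_zero_nat (𝕜 := ℝ)).pow (j - k)
  refine (mul_zero L ▸ hf.mul hinv).congr' ?_
  filter_upwards [eventually_ne_atTop 0] with N hN
  rw [inv_pow, ← div_eq_mul_inv, div_div, ← pow_add, Nat.add_sub_cancel' hkj.le]

lemma sum_Icc_one_pred_eq {f : ℕ → ℝ} {N : ℕ} (hN : N ≠ 0) :
    ∑ n ∈ Icc 1 (N - 1), f n = ∑ n ∈ range N, f n - f 0 := by
  obtain ⟨M, rfl⟩ := Nat.exists_eq_succ_of_ne_zero hN
  rw [sum_range_succ', Nat.succ_sub_one, ← Ico_add_one_right_eq_Icc, sum_Ico_eq_sum_range]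
  simp [add_comm]

lemma tendsto_sum_Icc_one_pred_div {f : ℕ → ℝ} {j : ℕ} {L : ℝ} (hj : j ≠ 0)
    (hf : Tendsto (fun N : ℕ => (∑ n ∈ range N, f n) / (N : ℝ) ^ j) atTop (𝓝 L)) :
    Tendsto (fun N : ℕ => (∑ n ∈ Icc 1 (N - 1), f n) / (N : ℝ) ^ j) atTop (𝓝 L) := by
  have h0 : Tendsto (fun N : ℕ => f 0 / (N : ℝ) ^ j) atTop (𝓝 0) :=
    tendsto_div_pow_of_lt (L := f 0) (Nat.pos_of_ne_zero hj) (by simp)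
  refine (sub_zero L ▸ hf.sub h0).congr' ?_
  filter_upwards [eventually_ne_atTop 0] with N hN
  rw [sum_Icc_one_pred_eq hN, sub_div]

lemma tendsto_sum_range_pow_div (k : ℕ) :
    Tendsto (fun N : ℕ => (∑ n ∈ range N, (n : ℝ) ^ k) / (N : ℝ) ^ (k + 1)) atTop
      (𝓝 (1 / (k + 1))) := by
  set c : ℕ → ℝ := fun i => bernoulli i * (k + 1).choose i / (k + 1)
  have hfaulhaber : ∀ N : ℕ, N ≠ 0 → (∑ n ∈ range N, (n : ℝ) ^ k) / (N : ℝ) ^ (k + 1)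
      = ∑ i ∈ range (k + 1), c i * ((N : ℝ)⁻¹) ^ i := by
    intro N hN
    have h := congrArg (fun q : ℚ => (q : ℝ)) (sum_range_pow N k)
    push_cast at h
    rw [h, sum_div]
    refine sum_congr rfl fun i hi => ?_
    rw [pow_sub₀ _ (Nat.cast_ne_zero.2 hN) (mem_range.1 hi).le, inv_pow]
    simp only [c]
    field_simp
  have hlim := ((show Continuous fun x : ℝ => ∑ i ∈ range (k + 1), c i * x ^ i by fun_prop).tendsto
    0).comp tendsto_inv_atTop_nhds_zero_nat
  rw [sum_range_succ'] at hlim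
  simp only [ne_eq, Nat.add_eq_zero_iff, one_ne_zero, and_false, not_false_eq_true, zero_pow,
    mul_zero, sum_const_zero, bernoulli_zero, Rat.cast_one, Nat.choose_zero_right, Nat.cast_one,
    mul_one, one_div, pow_zero, zero_add, c] at hlim
  rw [one_div]
  refine hlim.congr' ?_
  filter_upwards [eventually_ne_atTop 0] with N hN
  exact (hfaulhaber N hN).symm

lemma tendsto_sum_range_eval_div {P : ℝ[X]} {d : ℕ} (hP : P.natDegree ≤ d) :
    Tendsto (fun N : ℕ => (∑ n ∈ range N, P.eval (n : ℝ)) / (N : ℝ) ^ (d + 1)) atTop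
      (𝓝 (P.coeff d / (d + 1))) := by
  have hterm : ∀ i ∈ range (d + 1), Tendsto (fun N : ℕ => P.coeff i *
      ((∑ n ∈ range N, (n : ℝ) ^ i) / (N : ℝ) ^ (d + 1))) atTop
      (𝓝 (if i = d then P.coeff i * (1 / (d + 1)) else 0)) := by
    intro i hi
    split_ifs with hid
    · subst hid
      exact (tendsto_sum_range_pow_div i).const_mul _
    · have hlt : i + 1 < d + 1 := by have := mem_range.1 hi; omega
      simpa using (tendsto_div_pow_of_lt hlt (tendsto_sum_range_pow_div i)).const_mul (P.coeff i)
  have hsum := tendsto_finsetSum _ hterm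
  rw [sum_ite_eq' _ _ (fun i => P.coeff i * (1 / (d + 1))), if_pos (self_mem_range_succ d),
    mul_one_div] at hsum
  refine hsum.congr fun N => ?_
  simp only [Polynomial.eval_eq_sum_range' (Nat.lt_succ_of_le hP), sum_div, mul_div_assoc]
  rw [sum_comm]
  simp only [mul_sum, Nat.succ_eq_add_one]

lemma abs_sum_range_cos_le {α : ℝ} (hα : sin (α / 2) ≠ 0) (β : ℝ) (M : ℕ) :
    |∑ n ∈ range M, cos (α * n + β)| ≤ |sin (α / 2)|⁻¹ := by
  rw [← one_div, le_div_iff₀' (abs_pos.2 hα), ← abs_mul, sin_mul_sum_cos, abs_mul]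
  exact mul_le_one₀ (abs_sin_le_one _) (abs_nonneg _) (abs_cos_le_one _)

lemma abs_sum_range_mul_le_of_monotone {b x : ℕ → ℝ} {C : ℝ} (hb : Monotone b) (hb0 : 0 ≤ b 0)
    (hx : ∀ m, |∑ n ∈ range m, x n| ≤ C) (M : ℕ) :
    |∑ n ∈ range M, b n * x n| ≤ 2 * C * b M := by
  have hC : 0 ≤ C := by simpa using hx 0
  have hbM : 0 ≤ b (M - 1) := hb0.trans (hb (Nat.zero_le _))
  have hstep : ∀ i, 0 ≤ b (i + 1) - b i := fun i => sub_nonneg.2 (hb i.le_succ)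
  have hparts := sum_range_by_parts b x M
  simp only [smul_eq_mul] at hparts
  rw [hparts]
  calc _ ≤ |b (M - 1) * ∑ n ∈ range M, x n|
          + |∑ i ∈ range (M - 1), (b (i + 1) - b i) * ∑ n ∈ range (i + 1), x n| := abs_sub _ _
    _ ≤ b (M - 1) * C + ∑ i ∈ range (M - 1), (b (i + 1) - b i) * C := by
        gcongr
        · rw [abs_mul, abs_of_nonneg hbM]
          exact mul_le_mul_of_nonneg_left (hx M) hbM
        · refine (abs_sum_le_sum_abs _ _).trans (sum_le_sum fun i _ => ?_)
          rw [abs_mul, abs_of_nonneg (hstep i)]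
          exact mul_le_mul_of_nonneg_left (hx _) (hstep i)
    _ = C * (2 * b (M - 1) - b 0) := by rw [← sum_mul, sum_range_sub b]; ring
    _ ≤ 2 * C * b M := by nlinarith [hb (Nat.sub_le M 1)]

lemma isBigO_sum_range_pow_mul_cos {α : ℝ} (hα : sin (α / 2) ≠ 0) (β : ℝ) (k : ℕ) :
    (fun N : ℕ => ∑ n ∈ range N, (n : ℝ) ^ k * cos (α * n + β)) =O[atTop]
      fun N : ℕ => (N : ℝ) ^ k := by
  refine IsBigO.of_bound (2 * |sin (α / 2)|⁻¹) (Eventually.of_forall fun N => ?_)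
  rw [Real.norm_eq_abs, norm_of_nonneg (by positivity)]
  exact abs_sum_range_mul_le_of_monotone (fun m n h => by gcongr) (by positivity)
    (abs_sum_range_cos_le hα β) N

lemma isLittleO_natCast_pow_pow {k j : ℕ} (hkj : k < j) :
    (fun N : ℕ => (N : ℝ) ^ k) =o[atTop] fun N : ℕ => (N : ℝ) ^ j :=
  (isLittleO_pow_pow_atTop_of_lt hkj).comp_tendsto tendsto_natCast_atTop_atTop

lemma tendsto_sum_range_eval_mul_cos_div {α : ℝ} (hα : sin (α / 2) ≠ 0) (β : ℝ) {P : ℝ[X]}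
    {d : ℕ} (hP : P.natDegree ≤ d) :
    Tendsto (fun N : ℕ => (∑ n ∈ range N, P.eval (n : ℝ) * cos (α * n + β)) / (N : ℝ) ^ (d + 1))
      atTop (𝓝 0) := by
  have hterm : ∀ i ∈ range (d + 1), Tendsto (fun N : ℕ => P.coeff i *
      ((∑ n ∈ range N, (n : ℝ) ^ i * cos (α * n + β)) / (N : ℝ) ^ (d + 1))) atTop (𝓝 0) :=
    fun i hi => by
      simpa using (((isBigO_sum_range_pow_mul_cos hα β i).trans_isLittleO
        (isLittleO_natCast_pow_pow (mem_range.1 hi))).tendsto_div_nhds_zero).const_mul (P.coeff i)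
  have hsum := tendsto_finsetSum _ hterm
  rw [sum_const_zero] at hsum
  refine hsum.congr fun N => ?_
  simp only [Polynomial.eval_eq_sum_range' (Nat.lt_succ_of_le hP), sum_mul, sum_div]
  rw [sum_comm]
  simp only [mul_sum, mul_div_assoc, mul_assoc, Nat.succ_eq_add_one]

noncomputable def polySinusoid (P Q : ℝ[X]) (α β : ℝ) (n : ℕ) : ℝ :=
  P.eval (n : ℝ) * cos (α * n + β) + Q.eval (n : ℝ) * sin (α * n + β)

lemma tendsto_sum_range_polySinusoid_div {α : ℝ} (hα : sin (α / 2) ≠ 0) (β : ℝ) {P Q : ℝ[X]}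
    {d : ℕ} (hP : P.natDegree ≤ d) (hQ : Q.natDegree ≤ d) :
    Tendsto (fun N : ℕ => (∑ n ∈ range N, polySinusoid P Q α β n) / (N : ℝ) ^ (d + 1))
      atTop (𝓝 0) := by
  have hsin : ∀ n : ℕ, sin (α * n + β) = cos (α * n + (β - π / 2)) := fun n => by
    rw [← add_sub_assoc, cos_sub_pi_div_two]
  simpa [polySinusoid, hsin, sum_add_distrib, add_div] using
    (tendsto_sum_range_eval_mul_cos_div hα β hP).add
      (tendsto_sum_range_eval_mul_cos_div hα (β - π / 2) hQ)

lemma two_mul_polySinusoid_mul (P Q P' Q' : ℝ[X]) (α β : ℝ) (n : ℕ) :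
    2 * (polySinusoid P Q α β n * polySinusoid P' Q' α β n)
      = (P * P' + Q * Q').eval (n : ℝ)
        + polySinusoid (P * P' - Q * Q') (P * Q' + Q * P') (2 * α) (2 * β) n := by
  have hθ : 2 * α * n + 2 * β = 2 * (α * n + β) := by ring
  simp only [polySinusoid, Polynomial.eval_add, Polynomial.eval_sub, Polynomial.eval_mul, hθ,
    cos_two_mul, sin_two_mul]
  linear_combination (2 * Q.eval (n : ℝ) * Q'.eval (n : ℝ)) * sin_sq_add_cos_sq (α * n + β)

open Polynomial in
lemma tendsto_sum_range_polySinusoid_mul_div {α : ℝ} (hα : sin α ≠ 0) (β : ℝ)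
    {P Q P' Q' : ℝ[X]} {e e' : ℕ} (hP : P.natDegree ≤ e) (hQ : Q.natDegree ≤ e)
    (hP' : P'.natDegree ≤ e') (hQ' : Q'.natDegree ≤ e') :
    Tendsto (fun N : ℕ => (∑ n ∈ range N, polySinusoid P Q α β n * polySinusoid P' Q' α β n)
        / (N : ℝ) ^ (e + e' + 1)) atTop
      (𝓝 ((P.coeff e * P'.coeff e' + Q.coeff e * Q'.coeff e') / (2 * (e + e' + 1)))) := by
  have hmean := tendsto_sum_range_eval_div (natDegree_add_le_of_degree_le
    (natDegree_mul_le_of_le hP hP') (natDegree_mul_le_of_le hQ hQ'))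
  have hosc := tendsto_sum_range_polySinusoid_div (α := 2 * α)
    (by rwa [mul_div_cancel_left₀ _ two_ne_zero]) (2 * β)
    ((natDegree_sub_le _ _).trans (max_le (natDegree_mul_le_of_le hP hP')
      (natDegree_mul_le_of_le hQ hQ')))
    (natDegree_add_le_of_degree_le (natDegree_mul_le_of_le hP hQ')
      (natDegree_mul_le_of_le hQ hP'))
  rw [coeff_add, coeff_mul_add_eq_of_natDegree_le hP hP',
    coeff_mul_add_eq_of_natDegree_le hQ hQ'] at hmean
  convert (hmean.add hosc).div_const 2 using 1
  · ext N
    rw [← add_div, ← sum_add_distrib]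
    simp only [← two_mul_polySinusoid_mul, ← mul_sum]
    ring
  · rw [add_zero, div_div, Nat.cast_add]
    congr 1
    ring

lemma det_of_div_pow {n : Type*} [Fintype n] [DecidableEq n] (M : Matrix n n ℝ) (e : n → ℕ)
    (x : ℝ) : (Matrix.of fun i j => M i j / x ^ (e i + e j + 1)).det
      = M.det / x ^ (2 * ∑ i, e i + Fintype.card n) := by
  have hfactor : (Matrix.of fun i j => M i j / x ^ (e i + e j + 1)) = Matrix.of fun i j =>
      (x ^ e i)⁻¹ * (Matrix.of fun i j => (x ^ (e j + 1))⁻¹ * M i j) i j := by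
    ext i j
    simp only [Matrix.of_apply, pow_add, mul_inv]
    ring
  rw [hfactor, Matrix.det_mul_column, Matrix.det_mul_row]
  simp only [prod_inv_distrib, prod_pow_eq_pow_sum, sum_add_distrib, sum_const, card_univ,
    smul_eq_mul, mul_one]
  rw [div_eq_mul_inv, two_mul, pow_add, pow_add, mul_inv, mul_inv]
  ring

open Polynomial in
noncomputable def zCosAmp (a T ψ : ℝ) : Fin 3 → ℝ[X] :=
  ![C (sin ψ), C (a * T * (cos ψ - 1)) * X + C (a * T * cos ψ), C (a * (cos ψ - 1))]

open Polynomial in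
noncomputable def zSinAmp (a T ψ : ℝ) : Fin 3 → ℝ[X] :=
  ![C (cos ψ - 1), C (-(a * T * sin ψ)) * X + C (-(a * T * sin ψ)), C (-(a * sin ψ))]

def zDeg : Fin 3 → ℕ := ![0, 1, 0]

lemma zSeq_eq_polySinusoid (a T ω φ : ℝ) (i : Fin 3) (n : ℕ) :
    zSeq a T ω φ i n
      = polySinusoid (zCosAmp a T (ω * T) i) (zSinAmp a T (ω * T) i) (ω * T) φ n := by
  have hshift : ω * T * ((n : ℝ) + 1) + φ = (ω * T * n + φ) + ω * T := by ring
  fin_cases i <;>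
  · simp only [zSeq, polySinusoid, zCosAmp, zSinAmp, Fin.zero_eta, Fin.mk_one, Fin.reduceFinMk,
      Matrix.cons_val, hshift, sin_add _ (ω * T), cos_add _ (ω * T), Polynomial.eval_add,
      Polynomial.eval_mul, Polynomial.eval_C, Polynomial.eval_X]
    ring

lemma natDegree_zAmp_le (a T ψ : ℝ) (i : Fin 3) :
    (zCosAmp a T ψ i).natDegree ≤ zDeg i ∧ (zSinAmp a T ψ i).natDegree ≤ zDeg i := by
  fin_cases i <;> refine ⟨?_, ?_⟩ <;>
    simp only [zCosAmp, zSinAmp, zDeg, Fin.zero_eta, Fin.mk_one, Fin.reduceFinMk,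
      Matrix.cons_val] <;>
    compute_degree

lemma coeff_zCosAmp_zDeg (a T ψ : ℝ) (i : Fin 3) :
    (zCosAmp a T ψ i).coeff (zDeg i) = ![sin ψ, a * T * (cos ψ - 1), a * (cos ψ - 1)] i := by
  fin_cases i <;> simp [zCosAmp, zDeg]

lemma coeff_zSinAmp_zDeg (a T ψ : ℝ) (i : Fin 3) :
    (zSinAmp a T ψ i).coeff (zDeg i) = ![cos ψ - 1, -(a * T * sin ψ), -(a * sin ψ)] i := by
  fin_cases i <;> simp [zSinAmp, zDeg]

noncomputable def RmatLimit (a T ψ : ℝ) : Matrix (Fin 3) (Fin 3) ℝ :=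
  Matrix.of fun i j => ((zCosAmp a T ψ i).coeff (zDeg i) * (zCosAmp a T ψ j).coeff (zDeg j)
    + (zSinAmp a T ψ i).coeff (zDeg i) * (zSinAmp a T ψ j).coeff (zDeg j))
    / (2 * (zDeg i + zDeg j + 1))

lemma tendsto_Rmat_div (a T ω φ : ℝ) (hs : sin (ω * T) ≠ 0) (i j : Fin 3) :
    Tendsto (fun N : ℕ => Rmat a T ω φ N i j / (N : ℝ) ^ (zDeg i + zDeg j + 1)) atTop
      (𝓝 (RmatLimit a T (ω * T) i j)) := by
  obtain ⟨hPi, hQi⟩ := natDegree_zAmp_le a T (ω * T) i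
  obtain ⟨hPj, hQj⟩ := natDegree_zAmp_le a T (ω * T) j
  simpa only [Rmat, RmatLimit, Matrix.of_apply, zSeq_eq_polySinusoid] using
    tendsto_sum_Icc_one_pred_div (Nat.succ_ne_zero _)
      (tendsto_sum_range_polySinusoid_mul_div hs φ hPi hQi hPj hQj)

lemma det_RmatLimit (a T ψ : ℝ) :
    (RmatLimit a T ψ).det = a ^ 4 * T ^ 2 * (1 - cos ψ) ^ 3 / 12 := by
  -- every nonzero entry is a multiple of `(cos ψ - 1) ^ 2 + sin ψ ^ 2`
  have hq : (cos ψ - 1) ^ 2 + sin ψ ^ 2 = 2 * (1 - cos ψ) := by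
    linear_combination sin_sq_add_cos_sq ψ
  simp only [RmatLimit, coeff_zCosAmp_zDeg, coeff_zSinAmp_zDeg]
  simp only [Matrix.det_fin_three, Matrix.of_apply, zDeg, Matrix.cons_val, Nat.cast_zero,
    Nat.cast_one]
  linear_combination a ^ 4 * T ^ 2 / 96 * (((cos ψ - 1) ^ 2 + sin ψ ^ 2) ^ 2
    + ((cos ψ - 1) ^ 2 + sin ψ ^ 2) * (2 * (1 - cos ψ)) + (2 * (1 - cos ψ)) ^ 2) * hq

theorem det_Rmat_asymptotics_general
    (a₁ T ω₁ φ₁ : ℝ) (hs : Real.sin (ω₁ * T) ≠ 0) :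
    Tendsto (fun N : ℕ => (Rmat a₁ T ω₁ φ₁ N).det / (N : ℝ) ^ 5)
      atTop (nhds (a₁ ^ 4 * T ^ 2 * (1 - Real.cos (ω₁ * T)) ^ 3 / 12)) := by
  have hscaled : Tendsto (fun N : ℕ => Matrix.of fun i j =>
      Rmat a₁ T ω₁ φ₁ N i j / (N : ℝ) ^ (zDeg i + zDeg j + 1)) atTop
      (𝓝 (RmatLimit a₁ T (ω₁ * T))) :=
    tendsto_pi_nhds.2 fun i => tendsto_pi_nhds.2 fun j => tendsto_Rmat_div a₁ T ω₁ φ₁ hs i j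
  have hdet := ((show Continuous (Matrix.det : Matrix (Fin 3) (Fin 3) ℝ → ℝ) by fun_prop).tendsto
    _).comp hscaled
  rw [Function.comp_def, det_RmatLimit] at hdet
  refine hdet.congr fun N => ?_
  simp [det_of_div_pow, zDeg, Fin.sum_univ_three]

theorem det_Rmat_asymptotics
    (a₁ T ω₁ φ₁ : ℝ) (ha : a₁ ≠ 0) (hT : 0 < T) (hs : Real.sin (ω₁ * T) ≠ 0) :
    Tendsto (fun N : ℕ => (Rmat a₁ T ω₁ φ₁ N).det / (N : ℝ) ^ 5)
      atTop (nhds (a₁ ^ 4 * T ^ 2 * (1 - Real.cos (ω₁ * T)) ^ 3 / 12)) :=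
  det_Rmat_asymptotics_general a₁ T ω₁ φ₁ hs
end
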